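/- In a spherical triangle on the unit sphere, the spherical law of cosines cos a = cos b·cos c + sin b·sin c·cos A implies, by expanding to fourth order in the side lengths, that the angle A exceeds the Euclidean angle A₀ of the triangle with the same sides (given by the planar law of cosines) by Area/3 + O(δ⁴), where δ is the maximum side length and Area denotes the spherical area of the triangle. -/

import Mathlib

open Real

/-- The angle `A` opposite side `a` in the spherical triangle with sides `a, b, c` on
the unit sphere, via the spherical law of cosines
`cos a = cos b cos c + sin b sin c cos A`. -/
noncomputable def sphAngle1 (a b c : ℝ) : ℝ :=
  Real.arccos ((Real.cos a - Real.cos b * Real.cos c) / (Real.sin b * Real.sin c))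

/-- The Euclidean angle `A₀` opposite side `a` in the planar triangle with the same
sides, via the planar law of cosines `cos A₀ = (b² + c² − a²)/(2bc)`. -/
noncomputable def planarAngle1 (a b c : ℝ) : ℝ :=
  Real.arccos ((b ^ 2 + c ^ 2 - a ^ 2) / (2 * b * c))

/-- The spherical area (= spherical excess, by Girard's theorem) of the spherical
triangle with sides `a, b, c` on the unit sphere. -/
noncomputable def sphArea1 (a b c : ℝ) : ℝ :=
  sphAngle1 a b c + sphAngle1 b c a + sphAngle1 c a b - π

section LegendreAux

open Complex Finset in
theorem sin_bound5 {x : ℝ} (hx : |x| ≤ 1) : |Real.sin x - (x - x ^ 3 / 6)| ≤ |x| ^ 5 * (1 / 100) :=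
  calc
    |Real.sin x - (x - x ^ 3 / 6)| = ‖Complex.sin x - (x - x ^ 3 / 6 : ℝ)‖ := by
      rw [← Real.norm_eq_abs, ← Complex.norm_real]; simp
    _ = ‖((Complex.exp (-x * I) - Complex.exp (x * I)) * I -
          (2 * x - x ^ 3 / 3 : ℝ)) / 2‖ := by
      simp [Complex.sin, sub_div, add_div, neg_div, mul_div_cancel_left₀ _ (two_ne_zero' ℂ),
        div_div, show (3 : ℂ) * 2 = 6 by norm_num]
    _ = ‖((Complex.exp (-x * I) - ∑ m ∈ range 5, (-x * I) ^ m / m.factorial) -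
                (Complex.exp (x * I) - ∑ m ∈ range 5, (x * I) ^ m / m.factorial)) * I / 2‖ :=
      (congr_arg (‖·‖)
        (congr_arg (fun x : ℂ => x / 2)
          (by
            simp only [sum_range_succ, neg_mul, pow_succ, pow_zero, mul_one, ofReal_sub, ofReal_mul,
              ofReal_ofNat, ofReal_div, range_zero, sum_empty, Nat.factorial, Nat.cast_one, ne_eq,
              one_ne_zero, not_false_eq_true, div_self, zero_add, div_one, mul_neg, neg_neg,
              Nat.mul_one, Nat.cast_succ, Nat.cast_mul, Nat.cast_ofNat]
            apply Complex.ext <;> simp [div_eq_mul_inv, Complex.normSq] <;> ring)))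
    _ ≤ ‖(Complex.exp (-x * I) - ∑ m ∈ range 5, (-x * I) ^ m / m.factorial) * I / 2‖ +
          ‖-((Complex.exp (x * I) - ∑ m ∈ range 5, (x * I) ^ m / m.factorial) * I) / 2‖ := by
      rw [sub_mul, sub_eq_add_neg, add_div]; exact norm_add_le _ _
    _ = ‖Complex.exp (x * I) - ∑ m ∈ range 5, (x * I) ^ m / m.factorial‖ / 2 +
          ‖Complex.exp (-x * I) - ∑ m ∈ range 5, (-x * I) ^ m / m.factorial‖ / 2 := by
      simp [add_comm, norm_div]
    _ ≤ ‖(x:ℂ) * I‖ ^ 5 * (Nat.succ 5 * (Nat.factorial 5 * (5 : ℕ) : ℝ)⁻¹) / 2 +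
          ‖-(x:ℂ) * I‖ ^ 5 * (Nat.succ 5 * (Nat.factorial 5 * (5 : ℕ) : ℝ)⁻¹) / 2 := by
      gcongr
      · exact Complex.exp_bound (by simpa) (by decide)
      · exact Complex.exp_bound (by simpa) (by decide)
    _ ≤ |x| ^ 5 * (1 / 100) := by norm_num [Nat.factorial]

theorem arctan_approx (m : ℝ) : |Real.arctan m - m| ≤ |m| ^ 3 := by
  have key : ∀ t : ℝ, 0 ≤ t → |Real.arctan t - t| ≤ |t| ^ 3 := by
    intro t ht
    have hnn : 0 ≤ Real.arctan t := by
      have := Real.arctan_strictMono.monotone ht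
      simpa [Real.arctan_zero] using this
    have h1 : Real.arctan t ≤ t := by
      have := Real.le_tan hnn (Real.arctan_lt_pi_div_two t)
      rwa [Real.tan_arctan] at this
    have h2 : Real.sin (Real.arctan t) ≤ Real.arctan t := Real.sin_le hnn
    have h3 : Real.sin (Real.arctan t) = t / Real.sqrt (1 + t ^ 2) := Real.sin_arctan t
    have hS : Real.sqrt (1 + t ^ 2) ≤ 1 + t ^ 2 / 2 := by
      rw [show (1 : ℝ) + t ^ 2 / 2 = Real.sqrt ((1 + t ^ 2 / 2) ^ 2) from
        (Real.sqrt_sq (by positivity)).symm]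
      exact Real.sqrt_le_sqrt (by nlinarith [sq_nonneg t])
    have hS1 : 1 ≤ Real.sqrt (1 + t ^ 2) := by
      have h := Real.sqrt_le_sqrt (show (1:ℝ) ≤ 1 + t ^ 2 by nlinarith)
      rwa [Real.sqrt_one] at h
    have hSpos : 0 < Real.sqrt (1 + t ^ 2) := by linarith
    have h4 : (t - t ^ 3) * Real.sqrt (1 + t ^ 2) ≤ t := by
      nlinarith [mul_le_mul_of_nonneg_left hS ht,
        mul_le_mul_of_nonneg_left hS1 (show (0:ℝ) ≤ t ^ 3 by positivity)]
    have h5 : t - t ^ 3 ≤ t / Real.sqrt (1 + t ^ 2) := (le_div_iff₀ hSpos).mpr h4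
    have h6 : t - Real.arctan t ≤ t ^ 3 := by
      have := h3 ▸ h2
      linarith
    rw [abs_of_nonneg ht, abs_le]
    constructor <;> nlinarith [pow_nonneg ht 3]
  rcases le_or_gt 0 m with hm | hm
  · exact key m hm
  · have h := key (-m) (by linarith)
    rw [Real.arctan_neg] at h
    rw [show -(Real.arctan m) - -m = -(Real.arctan m - m) by ring, abs_neg] at h
    simpa [abs_neg] using h


theorem prod_sin {s t : ℝ} (hs : 0 < s) (ht : 0 < t) (hs1 : s ≤ 1) (ht1 : t ≤ 1) :
    |Real.sin s * Real.sin t - s * t * (1 - (s ^ 2 + t ^ 2) / 6)| ≤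
      s * t * (s ^ 2 + t ^ 2) ^ 2 / 50 := by
  have hbs := sin_bound5 (x := s) (by rw [abs_of_pos hs]; exact hs1)
  have hbt := sin_bound5 (x := t) (by rw [abs_of_pos ht]; exact ht1)
  rw [abs_of_pos hs] at hbs
  rw [abs_of_pos ht] at hbt
  have hsin_s_pos : 0 < Real.sin s := Real.sin_pos_of_pos_of_lt_pi hs (by nlinarith [Real.pi_gt_three])
  have hsin_t_le : Real.sin t ≤ t := Real.sin_le ht.le
  have hsin_t_nn : 0 ≤ Real.sin t := (Real.sin_pos_of_pos_of_lt_pi ht (by nlinarith [Real.pi_gt_three])).le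
  have heq : Real.sin s * Real.sin t - s * t * (1 - (s ^ 2 + t ^ 2) / 6) =
      s * t * (s ^ 2 * t ^ 2) / 36 + (Real.sin s - (s - s ^ 3 / 6)) * Real.sin t
        + (s - s ^ 3 / 6) * (Real.sin t - (t - t ^ 3 / 6)) := by ring
  rw [heq]
  have h1 : |(Real.sin s - (s - s ^ 3 / 6)) * Real.sin t| ≤ s ^ 5 * (1 / 100) * t := by
    rw [abs_mul]
    apply mul_le_mul hbs (by rwa [abs_of_nonneg hsin_t_nn]) (abs_nonneg _)
    positivity
  have h2 : |(s - s ^ 3 / 6) * (Real.sin t - (t - t ^ 3 / 6))| ≤ s * (t ^ 5 * (1 / 100)) := by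
    rw [abs_mul]
    apply mul_le_mul _ hbt (abs_nonneg _) hs.le
    rw [abs_of_nonneg (by nlinarith)]
    nlinarith
  calc |s * t * (s ^ 2 * t ^ 2) / 36 + (Real.sin s - (s - s ^ 3 / 6)) * Real.sin t
        + (s - s ^ 3 / 6) * (Real.sin t - (t - t ^ 3 / 6))|
      ≤ |s * t * (s ^ 2 * t ^ 2) / 36| + |(Real.sin s - (s - s ^ 3 / 6)) * Real.sin t|
        + |(s - s ^ 3 / 6) * (Real.sin t - (t - t ^ 3 / 6))| := by
        exact (abs_add_le _ _).trans (by gcongr; exact abs_add_le _ _)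
    _ ≤ s * t * (s ^ 2 * t ^ 2) / 36 + s ^ 5 * (1 / 100) * t + s * (t ^ 5 * (1 / 100)) := by
        rw [abs_of_nonneg (by positivity)]
        linarith [h1, h2]
    _ ≤ s * t * (s ^ 2 + t ^ 2) ^ 2 / 50 := by nlinarith [sq_nonneg (s - t), sq_nonneg (s + t), mul_pos hs ht, sq_nonneg (s*t), mul_nonneg (mul_nonneg hs.le ht.le) (sq_nonneg (s - t)), mul_nonneg (mul_nonneg hs.le ht.le) (sq_nonneg (s*s - t*t))]

-- generic: arccos ((Q-P)/(Q+P)) = 2 arctan (sqrt (P/Q)) for P > 0, Q > 0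
theorem arccos_ratio (P Q : ℝ) (hP : 0 < P) (hQ : 0 < Q) :
    Real.arccos ((Q - P) / (Q + P)) = 2 * Real.arctan (Real.sqrt (P / Q)) := by
  set p := Real.sqrt (P / Q) with hp
  have hp0 : 0 < p := Real.sqrt_pos.mpr (by positivity)
  have hp2 : p ^ 2 = P / Q := Real.sq_sqrt (by positivity)
  have hcos : Real.cos (2 * Real.arctan p) = (Q - P) / (Q + P) := by
    rw [Real.cos_two_mul, Real.cos_arctan]
    have hs : Real.sqrt (1 + p ^ 2) ^ 2 = 1 + p ^ 2 := Real.sq_sqrt (by positivity)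
    have hsp : 0 < Real.sqrt (1 + p ^ 2) := Real.sqrt_pos.mpr (by positivity)
    have hPQ : p ^ 2 * Q = P := by rw [hp2]; field_simp
    field_simp
    linear_combination (-2 : ℝ) * hPQ + (-2 * Q) * hs
  have h0 : 0 < Real.arctan p := by
    have := Real.arctan_strictMono hp0
    rwa [Real.arctan_zero] at this
  have h1 : Real.arctan p < π / 2 := Real.arctan_lt_pi_div_two p
  rw [← hcos, Real.arccos_cos (by linarith) (by linarith)]
-- spherical angle in terms of arctan
theorem sph_eq (y z w : ℝ) (hy : 0 < y) (hz : 0 < z) (hw : 0 < w) (hs : y + z + w ≤ 1) :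
    sphAngle1 (z + w) (y + w) (y + z) =
      2 * Real.arctan (Real.sqrt ((Real.sin z * Real.sin w) / (Real.sin (y + z + w) * Real.sin y))) := by
  have hpi : (1:ℝ) < π := by nlinarith [Real.pi_gt_three]
  have sin_pos : ∀ u : ℝ, 0 < u → u ≤ 1 → 0 < Real.sin u := fun u hu hu1 =>
    Real.sin_pos_of_pos_of_lt_pi hu (by linarith)
  have hsy := sin_pos y hy (by linarith)
  have hsz := sin_pos z hz (by linarith)
  have hsw := sin_pos w hw (by linarith)
  have hsx := sin_pos (y + z + w) (by linarith) hs
  have hsb := sin_pos (y + w) (by linarith) (by linarith)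
  have hsc := sin_pos (y + z) (by linarith) (by linarith)
  set P := Real.sin z * Real.sin w with hP
  set Q := Real.sin (y + z + w) * Real.sin y with hQ
  have hPpos : 0 < P := mul_pos hsz hsw
  have hQpos : 0 < Q := mul_pos hsx hsy
  have hnum : Real.cos (z + w) - Real.cos (y + w) * Real.cos (y + z) = Q - P := by
    rw [hP, hQ]
    simp only [Real.sin_add, Real.cos_add]
    linear_combination (-(Real.cos z * Real.cos w)) * (Real.sin_sq_add_cos_sq y)
  have hden : Real.sin (y + w) * Real.sin (y + z) = Q + P := by
    rw [hP, hQ]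
    simp only [Real.sin_add, Real.cos_add]
    linear_combination (Real.sin z * Real.sin w) * (Real.sin_sq_add_cos_sq y)
  rw [sphAngle1, hnum, hden, arccos_ratio P Q hPpos hQpos]

-- planar angle in terms of arctan
theorem planar_eq (y z w : ℝ) (hy : 0 < y) (hz : 0 < z) (hw : 0 < w) :
    planarAngle1 (z + w) (y + w) (y + z) =
      2 * Real.arctan (Real.sqrt ((z * w) / ((y + z + w) * y))) := by
  have hnum : ((y + w) ^ 2 + (y + z) ^ 2 - (z + w) ^ 2) / (2 * (y + w) * (y + z)) =
      ((y + z + w) * y - z * w) / ((y + z + w) * y + z * w) := by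
    rw [div_eq_div_iff (by positivity) (by positivity)]
    ring
  rw [planarAngle1, hnum, arccos_ratio (z * w) ((y + z + w) * y) (by positivity) (by positivity)]

-- square root estimate

set_option maxHeartbeats 1000000 in
theorem sqrt_est {R bcv d : ℝ} (hd : 0 < d) (hd2 : d^2 ≤ 1/100) (hbc0 : 0 < bcv)
    (hbcd : bcv ≤ d^2) (hR : |R - 1 - bcv/3| ≤ d^4) :
    |Real.sqrt R - 1 - bcv/6| ≤ d^4 ∧ |Real.sqrt R - 1| ≤ (18/100)*d^2
      ∧ (99/100) ≤ Real.sqrt R ∧ Real.sqrt R ≤ (101/100) := by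
  have hd4 : d^4 ≤ (1/100)*d^2 := by nlinarith [sq_nonneg d]
  obtain ⟨hRa, hRb⟩ := abs_le.mp hR
  have hRlo : (99/100:ℝ) ≤ R := by nlinarith
  have hRhi : R ≤ (102/100:ℝ) := by nlinarith
  have hR0 : (0:ℝ) ≤ R := by linarith
  set t := Real.sqrt R with htdef
  have ht0 : 0 ≤ t := Real.sqrt_nonneg R
  have ht2 : t^2 = R := Real.sq_sqrt hR0
  have tlo : (99/100:ℝ) ≤ t := by nlinarith [ht2]
  have thi : t ≤ (101/100:ℝ) := by nlinarith [ht2]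
  have e : (t - 1) * (t + 1) = R - 1 := by linear_combination ht2
  have htp : (0:ℝ) < t + 1 := by linarith
  have habseq : |t - 1| * (t + 1) = |R - 1| := by
    have := congrArg abs e
    rwa [abs_mul, abs_of_pos htp] at this
  have hRm1 : |R - 1| ≤ (35/100)*d^2 := by
    have : |R - 1| ≤ |R - 1 - bcv/3| + |bcv/3| := by
      have := abs_add_le (R - 1 - bcv/3) (bcv/3)
      simpa using this
    rw [abs_of_pos (by linarith : (0:ℝ) < bcv/3)] at this
    linarith
  have ht1 : |t - 1| ≤ (18/100)*d^2 := by
    have h1 : |t - 1| * (199/100) ≤ |t - 1| * (t + 1) :=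
      mul_le_mul_of_nonneg_left (by linarith) (abs_nonneg _)
    linarith [habseq, hRm1]
  have he3 : |t - 1 - bcv/6| ≤ d^4 := by
    obtain ⟨h1a, h1b⟩ := abs_le.mp ht1
    have e2 : (t - 1 - bcv/6) * (t + 1) = (R - 1 - bcv/3) + (bcv/6) * (1 - t) := by
      linear_combination ht2
    have habseq2 : |t - 1 - bcv/6| * (t + 1) = |(R - 1 - bcv/3) + (bcv/6) * (1 - t)| := by
      have := congrArg abs e2
      rwa [abs_mul, abs_of_pos htp] at this
    have hsecond : |(bcv/6) * (1 - t)| ≤ (bcv/6) * ((18/100)*d^2) := by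
      rw [abs_mul, abs_of_pos (by linarith : (0:ℝ) < bcv/6), abs_sub_comm]
      exact mul_le_mul_of_nonneg_left ht1 (by linarith)
    have hN : |(R - 1 - bcv/3) + (bcv/6) * (1 - t)| ≤ (103/100)*d^4 := by
      have habs := abs_add_le (R - 1 - bcv/3) ((bcv/6) * (1 - t))
      have hx1 : (bcv/6) * ((18/100)*d^2) ≤ (3/100)*d^4 := by nlinarith [sq_nonneg d]
      linarith [habs, hR, hsecond]
    have h1 : |t - 1 - bcv/6| * (199/100) ≤ |t - 1 - bcv/6| * (t + 1) :=
      mul_le_mul_of_nonneg_left (by linarith) (abs_nonneg _)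
    linarith [habseq2, hN]
  exact ⟨he3, ht1, tlo, thi⟩

-- arctan estimate
set_option maxHeartbeats 1000000 in
theorem arctan_est {q t u bcv d : ℝ} (hq : 0 < q) (hd : 0 < d) (hd2 : d^2 ≤ 1/100)
    (hbc0 : 0 < bcv) (hbcd : bcv ≤ d^2)
    (hu : u * (1 + q^2) = bcv)
    (htlo : (99/100:ℝ) ≤ t) (hthi : t ≤ (101/100:ℝ))
    (ht1 : |t - 1| ≤ (18/100)*d^2) (he3 : |t - 1 - bcv/6| ≤ d^4) :
    |2 * Real.arctan (q*t) - 2 * Real.arctan q - u*q/3| ≤ 2*d^4 := by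
  have hd4 : d^4 ≤ (1/100)*d^2 := by nlinarith [sq_nonneg d]
  have ht0 : (0:ℝ) < t := by linarith
  have hden : (0:ℝ) < 1 + q^2*t := by positivity
  have hq1 : 2*q ≤ 1 + q^2 := by nlinarith [sq_nonneg (q-1)]
  have hq3 : 2*q^3 ≤ (1+q^2)^2 := by nlinarith [sq_nonneg (q*(q-1)), sq_nonneg q]
  have hqt : (99/100)*(1+q^2) ≤ 1 + q^2*t := by nlinarith [sq_nonneg q]
  set m := q*(t-1)/(1 + q^2*t) with hmdef
  have hm2 : m * (1 + q^2*t) = q*(t-1) := by rw [hmdef]; field_simp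
  -- arctan subtraction
  have harc : Real.arctan (q*t) - Real.arctan q = Real.arctan m := by
    have hlt : (q*t) * (-q) < 1 := by nlinarith [mul_pos (mul_pos hq ht0) hq]
    have h := Real.arctan_add hlt
    rw [Real.arctan_neg] at h
    have harg : (q*t + -q) / (1 - q*t*(-q)) = m := by
      rw [hmdef]; congr 1 <;> ring
    rw [harg] at h
    linarith [h]
  -- bound on |m|
  have habs_m : |m| * (1 + q^2*t) = q * |t - 1| := by
    have := congrArg abs hm2
    rwa [abs_mul, abs_of_pos hden, abs_mul, abs_of_pos hq] at this
  have hm_small : |m| ≤ (1/10)*d^2 := by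
    have h1 : q * |t - 1| ≤ q * ((18/100)*d^2) := mul_le_mul_of_nonneg_left ht1 hq.le
    have h2 : (198/100)*q ≤ 1 + q^2*t := by nlinarith [sq_nonneg q, sq_nonneg (q-1)]
    have h3 : |m| * ((198/100)*q) ≤ |m| * (1 + q^2*t) :=
      mul_le_mul_of_nonneg_left h2 (abs_nonneg _)
    nlinarith [habs_m, mul_pos hq (pow_pos hd 2), abs_nonneg m, hq]
  -- main linear term bound
  obtain ⟨u', hu'⟩ : ∃ v : ℝ, v = u := ⟨u, rfl⟩
  have key : (2*m - u*q/3) * ((1 + q^2*t)*(1 + q^2)) =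
      2*q*(1+q^2)*(t - 1 - bcv/6) + (bcv*q^3/3)*(1 - t) := by
    linear_combination (2*(1+q^2)) * hm2 - (q*(1+q^2*t)/3) * hu
  have hDpos : (0:ℝ) < (1 + q^2*t)*(1 + q^2) := by positivity
  have hbound : |2*m - u*q/3| * ((1 + q^2*t)*(1 + q^2)) ≤
      (12/10)*d^4 * ((1 + q^2*t)*(1 + q^2)) := by
    have e1 : |2*m - u*q/3| * ((1 + q^2*t)*(1 + q^2))
        = |2*q*(1+q^2)*(t - 1 - bcv/6) + (bcv*q^3/3)*(1 - t)| := by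
      rw [← abs_of_pos hDpos, ← abs_mul, key]
    rw [e1]
    have t1 : |2*q*(1+q^2)*(t - 1 - bcv/6)| ≤ 2*q*(1+q^2)*d^4 := by
      rw [abs_mul, abs_of_pos (by positivity : (0:ℝ) < 2*q*(1+q^2))]
      exact mul_le_mul_of_nonneg_left he3 (by positivity)
    have t2 : |(bcv*q^3/3)*(1 - t)| ≤ (bcv*q^3/3)*((18/100)*d^2) := by
      rw [abs_mul, abs_of_pos (by positivity : (0:ℝ) < bcv*q^3/3), abs_sub_comm]
      exact mul_le_mul_of_nonneg_left ht1 (by positivity)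
    calc |2*q*(1+q^2)*(t - 1 - bcv/6) + (bcv*q^3/3)*(1 - t)|
        ≤ |2*q*(1+q^2)*(t - 1 - bcv/6)| + |(bcv*q^3/3)*(1 - t)| := abs_add_le _ _
      _ ≤ 2*q*(1+q^2)*d^4 + (bcv*q^3/3)*((18/100)*d^2) := add_le_add t1 t2
      _ ≤ (12/10)*d^4 * ((1 + q^2*t)*(1 + q^2)) := by
          have hP1 : (2*q) * ((1+q^2)*d^4) ≤ (1+q^2) * ((1+q^2)*d^4) :=
            mul_le_mul_of_nonneg_right hq1 (by positivity)
          have hP2 : bcv * (q^3*d^2) ≤ d^2 * (q^3*d^2) :=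
            mul_le_mul_of_nonneg_right hbcd (by positivity)
          have hP3 : (2*q^3) * d^4 ≤ (1+q^2)^2 * d^4 :=
            mul_le_mul_of_nonneg_right hq3 (by positivity)
          have hP4 : ((99/100)*(1+q^2)) * ((1+q^2)*d^4) ≤ (1 + q^2*t) * ((1+q^2)*d^4) :=
            mul_le_mul_of_nonneg_right hqt (by positivity)
          linarith [hP1, hP2, hP3, hP4, sq_nonneg ((1+q^2)*d^2), mul_nonneg (sq_nonneg (1+q^2)) (pow_nonneg hd.le 4)]
  have hmain : |2*m - u*q/3| ≤ (12/10)*d^4 :=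
    le_of_mul_le_mul_right (by linarith [hbound]) hDpos
  -- arctan cubic bound
  have hc := arctan_approx m
  have hm3 : |m|^3 ≤ (1/1000)*d^6 := by
    have := pow_le_pow_left₀ (abs_nonneg m) hm_small 3
    calc |m|^3 ≤ ((1/10)*d^2)^3 := this
      _ = (1/1000)*d^6 := by ring
  have hd6 : d^6 ≤ (1/100)*d^4 := by nlinarith [pow_pos hd 4, sq_nonneg d, pow_nonneg hd.le 4]
  -- assemble
  have final : |2 * Real.arctan (q*t) - 2 * Real.arctan q - u*q/3|
      = |2 * Real.arctan m - u*q/3| := by rw [show 2 * Real.arctan (q*t) - 2 * Real.arctan q = 2 * Real.arctan m by linarith [harc]]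
  rw [final]
  calc |2 * Real.arctan m - u*q/3|
      ≤ |2 * Real.arctan m - 2*m| + |2*m - u*q/3| := by
        have := abs_add_le (2 * Real.arctan m - 2*m) (2*m - u*q/3)
        simpa using this
    _ ≤ 2*|m|^3 + (12/10)*d^4 := by
        have h2 : |2 * Real.arctan m - 2*m| = 2*|Real.arctan m - m| := by
          rw [show 2 * Real.arctan m - 2*m = 2*(Real.arctan m - m) by ring, abs_mul]
          norm_num
        rw [h2]
        exact add_le_add (by linarith [hc]) hmain
    _ ≤ 2*d^4 := by linarith [hm3, hd6, pow_nonneg hd.le 4]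

set_option maxHeartbeats 1000000 in
theorem core' (δ y z w : ℝ) (hδ0 : 0 < δ) (hδ : δ ≤ 1/10)
    (hy : 0 < y) (hz : 0 < z) (hw : 0 < w)
    (ha : z + w ≤ δ) (hb : y + w ≤ δ) (hc : y + z ≤ δ) :
    |sphAngle1 (z + w) (y + w) (y + z) - planarAngle1 (z + w) (y + w) (y + z)
      - Real.sqrt ((y + z + w) * y * z * w) / 3| ≤ 2 * δ ^ 4 := by
  have hδ2 : δ ^ 2 ≤ 1 / 100 := by
    have h := pow_le_pow_left₀ hδ0.le hδ 2
    calc δ ^ 2 ≤ (1/10 : ℝ) ^ 2 := h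
      _ = 1 / 100 := by norm_num
  obtain ⟨x, hx⟩ : ∃ t : ℝ, t = y + z + w := ⟨_, rfl⟩
  rw [show y + z + w = x from hx.symm]
  have hx0 : 0 < x := by rw [hx]; positivity
  have hxδ : x ≤ 3 * δ / 2 := by rw [hx]; linarith
  have hx1 : x ≤ 1 := by linarith
  have hyδ : y ≤ δ := by linarith
  have hzδ : z ≤ δ := by linarith
  have hwδ : w ≤ δ := by linarith
  have hy1 : y ≤ 1 := by linarith
  have hz1 : z ≤ 1 := by linarith
  have hw1 : w ≤ 1 := by linarith
  have hpi : (1:ℝ) < π := by linarith [Real.pi_gt_three]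
  have hsz : 0 < Real.sin z := Real.sin_pos_of_pos_of_lt_pi hz (by linarith)
  have hsw : 0 < Real.sin w := Real.sin_pos_of_pos_of_lt_pi hw (by linarith)
  have hsy : 0 < Real.sin y := Real.sin_pos_of_pos_of_lt_pi hy (by linarith)
  have hsx : 0 < Real.sin x := Real.sin_pos_of_pos_of_lt_pi hx0 (by linarith)
  -- basic quantities
  obtain ⟨V, hV⟩ : ∃ t : ℝ, t = x * y * z * w := ⟨_, rfl⟩
  have hV0 : 0 < V := by rw [hV]; positivity
  obtain ⟨bc, hbc⟩ : ∃ t : ℝ, t = x * y + z * w := ⟨_, rfl⟩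
  have hbc0 : 0 < bc := by rw [hbc]; positivity
  have hbcδ : bc ≤ δ ^ 2 := by
    have e : bc = (y + w) * (y + z) := by rw [hbc, hx]; ring
    rw [e]
    calc (y + w) * (y + z) ≤ δ * δ :=
          mul_le_mul hb hc (by linarith) hδ0.le
      _ = δ ^ 2 := by ring
  obtain ⟨Nn, hNn⟩ : ∃ t : ℝ, t = Real.sin z * Real.sin w * (x * y) := ⟨_, rfl⟩
  obtain ⟨Dd, hDd⟩ : ∃ t : ℝ, t = Real.sin x * Real.sin y * (z * w) := ⟨_, rfl⟩
  have hDd0 : 0 < Dd := by rw [hDd]; positivity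
  -- product bounds
  have hP1 := prod_sin hz hw hz1 hw1
  have hP2 := prod_sin hx0 hy hx1 hy1
  -- E1 : |Nn - Dd - V*bc/3| ≤ (3/10)*V*δ^4
  have hE1a : |Nn - V * (1 - (z^2 + w^2)/6)| ≤ V * (4 * δ^4 / 50) := by
    have e : Nn - V * (1 - (z^2 + w^2)/6)
        = (Real.sin z * Real.sin w - z * w * (1 - (z^2 + w^2)/6)) * (x * y) := by
      rw [hNn, hV]; ring
    rw [e, abs_mul, abs_of_pos (mul_pos hx0 hy)]
    calc |Real.sin z * Real.sin w - z * w * (1 - (z^2 + w^2)/6)| * (x * y)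
        ≤ (z * w * (z ^ 2 + w ^ 2) ^ 2 / 50) * (x * y) :=
          mul_le_mul_of_nonneg_right hP1 (le_of_lt (mul_pos hx0 hy))
      _ ≤ V * (4 * δ^4 / 50) := by
          have hz2 : z^2 ≤ δ^2 := pow_le_pow_left₀ hz.le hzδ 2
          have hw2 : w^2 ≤ δ^2 := pow_le_pow_left₀ hw.le hwδ 2
          have h2 : (z^2 + w^2)^2 ≤ (2*δ^2)^2 := pow_le_pow_left₀ (by positivity) (by linarith) 2
          have h2' : (z^2 + w^2)^2 ≤ 4 * δ^4 := by
            calc (z^2 + w^2)^2 ≤ (2*δ^2)^2 := h2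
              _ = 4 * δ^4 := by ring
          have e2 : z * w * (z ^ 2 + w ^ 2) ^ 2 / 50 * (x * y) = V * ((z^2+w^2)^2) / 50 := by
            rw [hV]; ring
          rw [e2]
          have := mul_le_mul_of_nonneg_left h2' hV0.le
          linarith
  have hE1b : |Dd - V * (1 - (x^2 + y^2)/6)| ≤ V * (11 * δ^4 / 50) := by
    have e : Dd - V * (1 - (x^2 + y^2)/6)
        = (Real.sin x * Real.sin y - x * y * (1 - (x^2 + y^2)/6)) * (z * w) := by
      rw [hDd, hV]; ring
    rw [e, abs_mul, abs_of_pos (mul_pos hz hw)]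
    calc |Real.sin x * Real.sin y - x * y * (1 - (x^2 + y^2)/6)| * (z * w)
        ≤ (x * y * (x ^ 2 + y ^ 2) ^ 2 / 50) * (z * w) :=
          mul_le_mul_of_nonneg_right hP2 (le_of_lt (mul_pos hz hw))
      _ ≤ V * (11 * δ^4 / 50) := by
          have hx2 : x^2 ≤ (3*δ/2)^2 := pow_le_pow_left₀ hx0.le hxδ 2
          have hy2 : y^2 ≤ δ^2 := pow_le_pow_left₀ hy.le hyδ 2
          have hx2' : x^2 ≤ (9/4)*δ^2 := by
            calc x^2 ≤ (3*δ/2)^2 := hx2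
              _ = (9/4)*δ^2 := by ring
          have h2 : (x^2 + y^2)^2 ≤ ((13/4)*δ^2)^2 :=
            pow_le_pow_left₀ (by positivity) (by linarith) 2
          have h2' : (x^2 + y^2)^2 ≤ 11 * δ^4 := by
            have h4 : (0:ℝ) ≤ δ^4 := by positivity
            calc (x^2 + y^2)^2 ≤ ((13/4)*δ^2)^2 := h2
              _ = (169/16) * δ^4 := by ring
              _ ≤ 11 * δ^4 := by linarith
          have e2 : x * y * (x ^ 2 + y ^ 2) ^ 2 / 50 * (z * w) = V * ((x^2+y^2)^2) / 50 := by
            rw [hV]; ring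
          rw [e2]
          have := mul_le_mul_of_nonneg_left h2' hV0.le
          linarith
  have hkey : x^2 + y^2 - z^2 - w^2 = 2 * bc := by rw [hbc, hx]; ring
  have hE1 : |Nn - Dd - V * bc / 3| ≤ (3/10) * V * δ^4 := by
    have e : Nn - Dd - V * bc / 3 = (Nn - V * (1 - (z^2 + w^2)/6))
        - (Dd - V * (1 - (x^2 + y^2)/6)) := by linear_combination (V/6) * hkey
    rw [e]
    calc |(Nn - V * (1 - (z^2 + w^2)/6)) - (Dd - V * (1 - (x^2 + y^2)/6))|
        ≤ |Nn - V * (1 - (z^2 + w^2)/6)| + |Dd - V * (1 - (x^2 + y^2)/6)| := abs_sub _ _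
      _ ≤ V * (4 * δ^4 / 50) + V * (11 * δ^4 / 50) := add_le_add hE1a hE1b
      _ ≤ (3/10) * V * δ^4 := by
          have := mul_pos hV0 (pow_pos hδ0 4)
          linarith [this]
  -- Dd bounds
  have hsxyle : Real.sin x * Real.sin y ≤ x * y :=
    mul_le_mul (Real.sin_le hx0.le) (Real.sin_le hy.le) hsy.le hx0.le
  have hDd_le : Dd ≤ V := by
    rw [hDd, hV]
    calc Real.sin x * Real.sin y * (z*w) ≤ x*y*(z*w) :=
          mul_le_mul_of_nonneg_right hsxyle (by positivity)
      _ = x*y*z*w := by ring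
  have hx2 : x^2 ≤ (9/4)*δ^2 := by
    calc x^2 ≤ (3*δ/2)^2 := pow_le_pow_left₀ hx0.le hxδ 2
      _ = (9/4)*δ^2 := by ring
  have hy2 : y^2 ≤ δ^2 := pow_le_pow_left₀ hy.le hyδ 2
  have hδ4 : δ^4 ≤ (1/100)*δ^2 := by
    calc δ^4 = δ^2*δ^2 := by ring
      _ ≤ δ^2*(1/100) := mul_le_mul_of_nonneg_left hδ2 (sq_nonneg δ)
      _ = (1/100)*δ^2 := by ring
  have hsum13 : x^2 + y^2 ≤ (13/4)*δ^2 := by linarith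
  have hxy4 : (x^2+y^2)^2 ≤ 11*δ^4 := by
    have h4 : (0:ℝ) ≤ δ^4 := by positivity
    calc (x^2+y^2)^2 ≤ ((13/4)*δ^2)^2 := pow_le_pow_left₀ (by positivity) hsum13 2
      _ = (169/16)*δ^4 := by ring
      _ ≤ 11*δ^4 := by linarith
  have hS : (x^2+y^2)/6 + (x^2+y^2)^2/50 ≤ (6/10)*δ^2 := by linarith
  have hP2' := (abs_le.mp hP2).1
  have hfac : x*y*(1-(6/10)*δ^2) ≤ x*y*(1-((x^2+y^2)/6+(x^2+y^2)^2/50)) :=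
    mul_le_mul_of_nonneg_left (by linarith) (by positivity)
  have hsxyge : x*y*(1-(6/10)*δ^2) ≤ Real.sin x * Real.sin y := by
    have e : x*y*(1-((x^2+y^2)/6+(x^2+y^2)^2/50))
        = x*y*(1-(x^2+y^2)/6) - x*y*(x^2+y^2)^2/50 := by ring
    linarith [hP2', hfac]
  have hDd_ge : V*(1-(6/10)*δ^2) ≤ Dd := by
    have h := mul_le_mul_of_nonneg_right hsxyge (show (0:ℝ) ≤ z*w by positivity)
    rw [hDd, hV]
    linarith [h]
  have hDd99 : (99/100)*V ≤ Dd := by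
    have h1 : δ^2*V ≤ (1/100)*V := mul_le_mul_of_nonneg_right hδ2 hV0.le
    linarith [hDd_ge, h1]
  -- R
  obtain ⟨R, hRdef⟩ : ∃ r : ℝ, r = Nn / Dd := ⟨_, rfl⟩
  have hRe : R - 1 - bc/3 = (Nn - Dd - Dd*(bc/3))/Dd := by
    rw [hRdef]
    field_simp
  have hnum : |Nn - Dd - Dd*(bc/3)| ≤ (52/100)*V*δ^4 := by
    have e : Nn - Dd - Dd*(bc/3) = (Nn - Dd - V*bc/3) + (bc/3)*(V - Dd) := by ring
    have h2 : (0:ℝ) ≤ (bc/3)*(V-Dd) := mul_nonneg (by linarith) (by linarith)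
    have h3 : bc*(V - Dd) ≤ δ^2*((6/10)*δ^2*V) := by
      apply mul_le_mul hbcδ _ (by linarith) (sq_nonneg δ)
      linarith [hDd_ge]
    have h4 : (0:ℝ) ≤ V*δ^4 := by positivity
    calc |Nn - Dd - Dd*(bc/3)| = |(Nn - Dd - V*bc/3) + (bc/3)*(V - Dd)| := by rw [e]
      _ ≤ |Nn - Dd - V*bc/3| + |(bc/3)*(V - Dd)| := abs_add_le _ _
      _ = |Nn - Dd - V*bc/3| + (bc/3)*(V - Dd) := by rw [abs_of_nonneg h2]
      _ ≤ (52/100)*V*δ^4 := by linarith [hE1, h3]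
  have hRbound : |R - 1 - bc/3| ≤ δ^4 := by
    rw [hRe, abs_div, abs_of_pos hDd0, div_le_iff₀ hDd0]
    have hA : δ^4*((99/100)*V) ≤ δ^4*Dd := mul_le_mul_of_nonneg_left hDd99 (by positivity)
    linarith [hnum, hA, mul_nonneg hV0.le (pow_nonneg hδ0.le 4)]
  obtain ⟨he3, ht1, htlo, hthi⟩ := sqrt_est hδ0 hδ2 hbc0 hbcδ hRbound
  -- q and u
  obtain ⟨q, hqdef⟩ : ∃ s : ℝ, s = Real.sqrt ((z*w)/(x*y)) := ⟨_, rfl⟩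
  have hq0 : 0 < q := by
    rw [hqdef]; exact Real.sqrt_pos.mpr (by positivity)
  have hq2 : q^2 = (z*w)/(x*y) := by
    rw [hqdef]; exact Real.sq_sqrt (by positivity)
  have hu : (x*y) * (1 + q^2) = bc := by
    rw [hq2, hbc]; field_simp
  -- p = q * sqrt R
  have hp : Real.sqrt ((Real.sin z * Real.sin w)/(Real.sin x * Real.sin y))
      = q * Real.sqrt R := by
    have harg : (Real.sin z * Real.sin w)/(Real.sin x * Real.sin y)
        = ((z*w)/(x*y)) * R := by
      rw [hRdef, hNn, hDd]; field_simp
    rw [harg, Real.sqrt_mul (by positivity), hqdef]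
  -- W
  have hW : Real.sqrt (x*y*z*w) = (x*y)*q := by
    have harg : x*y*z*w = (x*y)^2 * ((z*w)/(x*y)) := by field_simp
    rw [harg, Real.sqrt_mul (sq_nonneg _), Real.sqrt_sq (by positivity), hqdef]
  -- angles
  have hsum1 : y + z + w ≤ 1 := by linarith [hx1, hx.ge]
  have hAngle : sphAngle1 (z+w) (y+w) (y+z) = 2 * Real.arctan (q * Real.sqrt R) := by
    rw [sph_eq y z w hy hz hw hsum1, ← hx, hp]
  have hA0 : planarAngle1 (z+w) (y+w) (y+z) = 2 * Real.arctan q := by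
    rw [planar_eq y z w hy hz hw, ← hx, ← hqdef]
  rw [hAngle, hA0, hW]
  have hfin := arctan_est hq0 hδ0 hδ2 hbc0 hbcδ hu htlo hthi ht1 he3
  calc |2 * Real.arctan (q * Real.sqrt R) - 2 * Real.arctan q - (x*y)*q/3|
      = |2 * Real.arctan (q * Real.sqrt R) - 2 * Real.arctan q - (x*y)*q/3| := rfl
    _ ≤ 2*δ^4 := hfin


theorem planar_sum (a b c : ℝ) (ha : 0 < a) (hb : 0 < b) (hc : 0 < c)
    (t1 : a < b + c) (t2 : b < a + c) (t3 : c < a + b) :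
    planarAngle1 a b c + planarAngle1 b c a + planarAngle1 c a b = π := by
  set y := (b + c - a) / 2 with hy
  set z := (a + c - b) / 2 with hz
  set w := (a + b - c) / 2 with hw
  have hy0 : 0 < y := by rw [hy]; linarith
  have hz0 : 0 < z := by rw [hz]; linarith
  have hw0 : 0 < w := by rw [hw]; linarith
  set x := y + z + w with hx
  have hx0 : 0 < x := by positivity
  -- the three angles
  have e1 : planarAngle1 a b c = 2 * Real.arctan (Real.sqrt ((z * w) / (x * y))) := by
    rw [show a = z + w by rw [hz, hw]; ring, show b = y + w by rw [hy, hw]; ring,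
      show c = y + z by rw [hy, hz]; ring] 
    exact planar_eq y z w hy0 hz0 hw0
  have e2 : planarAngle1 b c a = 2 * Real.arctan (Real.sqrt ((w * y) / (x * z))) := by
    rw [show b = w + y by rw [hy, hw]; ring, show c = z + y by rw [hy, hz]; ring,
      show a = z + w by rw [hz, hw]; ring]
    rw [planar_eq z w y hz0 hw0 hy0]
    rw [hx]; ring_nf
  have e3 : planarAngle1 c a b = 2 * Real.arctan (Real.sqrt ((y * z) / (x * w))) := by
    rw [show c = y + z by rw [hy, hz]; ring, show a = w + z by rw [hz, hw]; ring,
      show b = w + y by rw [hy, hw]; ring]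
    rw [planar_eq w y z hw0 hy0 hz0]
    rw [hx]; ring_nf
  set qa := Real.sqrt ((z * w) / (x * y)) with hqa
  set qb := Real.sqrt ((w * y) / (x * z)) with hqb
  set qc := Real.sqrt ((y * z) / (x * w)) with hqc
  have hqa0 : 0 < qa := Real.sqrt_pos.mpr (by positivity)
  have hqb0 : 0 < qb := Real.sqrt_pos.mpr (by positivity)
  have hqc0 : 0 < qc := Real.sqrt_pos.mpr (by positivity)
  have hab : qa * qb = w / x := by
    rw [hqa, hqb, ← Real.sqrt_mul (by positivity)]
    rw [show z * w / (x * y) * (w * y / (x * z)) = (w / x) ^ 2 by field_simp]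
    exact Real.sqrt_sq (by positivity)
  have hca : qc * qa = z / x := by
    rw [hqc, hqa, ← Real.sqrt_mul (by positivity)]
    rw [show y * z / (x * w) * (z * w / (x * y)) = (z / x) ^ 2 by field_simp]
    exact Real.sqrt_sq (by positivity)
  have hcb : qc * qb = y / x := by
    rw [hqc, hqb, ← Real.sqrt_mul (by positivity)]
    rw [show y * z / (x * w) * (w * y / (x * z)) = (y / x) ^ 2 by field_simp]
    exact Real.sqrt_sq (by positivity)
  have hablt : qa * qb < 1 := by
    rw [hab, div_lt_one hx0, hx]; linarith
  have harg : (qa + qb) / (1 - qa * qb) = qc⁻¹ := by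
    have h1 : 1 - qa * qb = (y + z) / x := by rw [hab]; field_simp; rw [hx]; ring
    have h2 : qc * (qa + qb) = (y + z) / x := by
      have : qc * qa + qc * qb = z / x + y / x := by rw [hca, hcb]
      rw [mul_add, this]; ring
    have hqab : 0 < qa + qb := by positivity
    rw [h1, ← h2]
    field_simp
  have hsum2 : Real.arctan qa + Real.arctan qb = π / 2 - Real.arctan qc := by
    rw [Real.arctan_add hablt, harg, Real.arctan_inv_of_pos hqc0]
  rw [e1, e2, e3]
  linarith [hsum2]


theorem core (δ a b c : ℝ) (hδ0 : 0 < δ) (hδ : δ ≤ 1/10) (ha : 0 < a) (hb : 0 < b) (hc : 0 < c)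
    (haδ : a ≤ δ) (hbδ : b ≤ δ) (hcδ : c ≤ δ) (t1 : a < b + c) (t2 : b < a + c) (t3 : c < a + b) :
    |sphAngle1 a b c - planarAngle1 a b c -
      Real.sqrt ((a+b+c)*(b+c-a)*(a+c-b)*(a+b-c))/12| ≤ 2*δ^4 := by
  set y := (b + c - a) / 2 with hy
  set z := (a + c - b) / 2 with hz
  set w := (a + b - c) / 2 with hw
  have hy0 : 0 < y := by rw [hy]; linarith
  have hz0 : 0 < z := by rw [hz]; linarith
  have hw0 : 0 < w := by rw [hw]; linarith
  have h := core' δ y z w hδ0 hδ hy0 hz0 hw0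
    (by rw [hz, hw]; linarith) (by rw [hy, hw]; linarith) (by rw [hy, hz]; linarith)
  have hsq : Real.sqrt ((y+z+w)*y*z*w)
      = Real.sqrt ((a+b+c)*(b+c-a)*(a+c-b)*(a+b-c))/4 := by
    rw [show (y+z+w)*y*z*w = (1/16)*((a+b+c)*(b+c-a)*(a+c-b)*(a+b-c)) by
      rw [hy, hz, hw]; ring]
    rw [Real.sqrt_mul (by norm_num : (0:ℝ) ≤ 1/16),
      show Real.sqrt (1/16) = 1/4 by
        rw [show (1/16:ℝ) = (1/4)^2 by norm_num, Real.sqrt_sq (by norm_num)]]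
    ring
  rw [hsq] at h
  rw [show Real.sqrt ((a+b+c)*(b+c-a)*(a+c-b)*(a+b-c))/4/3
      = Real.sqrt ((a+b+c)*(b+c-a)*(a+c-b)*(a+b-c))/12 by ring] at h
  rw [show z + w = a by rw [hz, hw]; ring, show y + w = b by rw [hy, hw]; ring,
    show y + z = c by rw [hy, hz]; ring] at h
  exact h

/-- **Legendre's theorem, precise asymptotic version.**  For spherical triangles on the
unit sphere with all sides at most `δ`, the angle `A` given by the spherical law of
cosines exceeds the Euclidean angle `A₀` of the triangle with the same sides by
`Area/3 + O(δ⁴)` as `δ → 0`. -/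
theorem legendre_fourth_order :
    ∃ δ₀ : ℝ, 0 < δ₀ ∧ ∃ K : ℝ, 0 ≤ K ∧
      ∀ δ : ℝ, 0 < δ → δ ≤ δ₀ →
        ∀ a b c : ℝ, 0 < a → 0 < b → 0 < c → a ≤ δ → b ≤ δ → c ≤ δ →
          a < b + c → b < a + c → c < a + b →
          |sphAngle1 a b c - planarAngle1 a b c - sphArea1 a b c / 3| ≤ K * δ ^ 4 := by
  refine ⟨1/10, by norm_num, 4, by norm_num, ?_⟩
  intro δ hδ0 hδ a b c ha hb hc haδ hbδ hcδ t1 t2 t3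
  have h1 := core δ a b c hδ0 hδ ha hb hc haδ hbδ hcδ t1 t2 t3
  have h2 := core δ b c a hδ0 hδ hb hc ha hbδ hcδ haδ (by linarith) (by linarith) (by linarith)
  have h3 := core δ c a b hδ0 hδ hc ha hb hcδ haδ hbδ (by linarith) (by linarith) (by linarith)
  rw [show (b+c+a)*(c+a-b)*(b+a-c)*(b+c-a) = (a+b+c)*(b+c-a)*(a+c-b)*(a+b-c) by ring] at h2
  rw [show (c+a+b)*(a+b-c)*(c+b-a)*(c+a-b) = (a+b+c)*(b+c-a)*(a+c-b)*(a+b-c) by ring] at h3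
  have hsum := planar_sum a b c ha hb hc t1 t2 t3
  set S := Real.sqrt ((a+b+c)*(b+c-a)*(a+c-b)*(a+b-c)) with hS
  set X := sphAngle1 a b c - planarAngle1 a b c - S/12 with hX
  set Y := sphAngle1 b c a - planarAngle1 b c a - S/12 with hY
  set Z := sphAngle1 c a b - planarAngle1 c a b - S/12 with hZ
  have key : sphAngle1 a b c - planarAngle1 a b c - sphArea1 a b c / 3
      = (2/3)*X - (1/3)*Y - (1/3)*Z := by
    rw [hX, hY, hZ, sphArea1]
    linear_combination (-1/3) * hsum
  rw [key]
  have habs : |(2/3)*X - (1/3)*Y - (1/3)*Z| ≤ (2/3)*|X| + (1/3)*|Y| + (1/3)*|Z| := by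
    have e1 := abs_sub ((2/3)*X - (1/3)*Y) ((1/3)*Z)
    have e2 := abs_sub ((2/3)*X) ((1/3)*Y)
    simp only [abs_mul] at e1 e2
    have c1 : |(2/3 : ℝ)| = 2/3 := abs_of_pos (by norm_num)
    have c2 : |(1/3 : ℝ)| = 1/3 := abs_of_pos (by norm_num)
    rw [c2] at e1
    rw [c1, c2] at e2
    linarith
  have hp4 : (0:ℝ) ≤ δ^4 := by positivity
  calc |(2/3)*X - (1/3)*Y - (1/3)*Z| ≤ (2/3)*|X| + (1/3)*|Y| + (1/3)*|Z| := habs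
    _ ≤ 4 * δ^4 := by linarith [h1, h2, h3, abs_nonneg X, abs_nonneg Y, abs_nonneg Z]

end LegendreAux
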